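/- arXiv:2512.01862 — 9 statements merged into one kernel-verified Lean document; each statement's English description precedes it below -/
import Mathlib

section
/- Let X and Y be Polish spaces, let A ⊆ X × Y be analytic, and let μ be a Borel probability measure on X such that the complement of the projection proj_X(A) is μ-null (i.e., μ(proj_X(A)) = 1 for the completion of μ). Then there exists a Borel probability measure ν on X × Y whose pushforward under the first projection equals μ and whose completion assigns measure 1 to A (i.e., the complement of A is ν-null). -/
/-!
Write `A = g(ℕ^ℕ)` with `g` continuous and put `π = Prod.fst ∘ g`. A Choquet-type argument,
shrinking `ℕ^ℕ` one coordinate at a time to the boxes `{z | z i ≤ σ i for i < k}` while losing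
at most `δₖ` of outer measure, yields compact sets `Kₙ ⊆ ℕ^ℕ` whose images `π(Kₙ)` cover
`μ`-almost all of `X`. Over the compact set `π(Kₙ)`, sending `x` to the lexicographically least
point of the closed fibre `Kₙ ∩ π⁻¹{x}` is a Borel section of `π`. Gluing these sections gives a
measurable `s` with `π ∘ s = id` almost everywhere, and `ν = (g ∘ s)₊ μ` has marginal `μ` and is
concentrated on the σ-compact set `g(⋃ Kₙ) ⊆ A`.
-/

open MeasureTheory Set Filter Topology
open scoped ENNReal

namespace Lubin

noncomputable def lexMinStep (F : Set (ℕ → ℕ)) (k : ℕ) (p : Fin k → ℕ) : ℕ :=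
  sInf {n | ∃ z ∈ F, (∀ i : Fin k, z i = p i) ∧ z k = n}

/-- For closed nonempty `F` this is the lexicographically least element of `F`. -/
noncomputable def lexMin (F : Set (ℕ → ℕ)) (k : ℕ) : ℕ :=
  lexMinStep F k fun i => lexMin F i

lemma lexMin_apply (F : Set (ℕ → ℕ)) (k : ℕ) :
    lexMin F k = lexMinStep F k fun i => lexMin F i := by
  rw [lexMin]

lemma exists_mem_forall_lt_eq_lexMin {F : Set (ℕ → ℕ)} (hF : F.Nonempty) (k : ℕ) :
    ∃ z ∈ F, ∀ i < k, z i = lexMin F i := by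
  induction k with
  | zero => exact hF.imp fun z hz => ⟨hz, fun i hi => absurd hi i.not_lt_zero⟩
  | succ k ih =>
    obtain ⟨z, hzF, hz⟩ := ih
    obtain ⟨w, hwF, hw, hwk⟩ := Nat.sInf_mem (s := {n | ∃ z ∈ F,
      (∀ i : Fin k, z i = lexMin F i) ∧ z k = n}) ⟨z k, z, hzF, fun i => hz i i.2, rfl⟩
    refine ⟨w, hwF, fun i hi => ?_⟩
    rcases Nat.lt_succ_iff_lt_or_eq.1 hi with hi | rfl
    · exact hw ⟨i, hi⟩
    · rw [hwk, lexMin_apply]; rfl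

lemma lexMin_mem {F : Set (ℕ → ℕ)} (hF : IsClosed F) (hne : F.Nonempty) : lexMin F ∈ F := by
  choose z hzF hz using exists_mem_forall_lt_eq_lexMin hne
  refine hF.mem_of_tendsto (b := atTop) (tendsto_pi_nhds.2 fun i => ?_) (Eventually.of_forall hzF)
  exact tendsto_atTop_of_eventually_const (i₀ := i + 1) fun k hk => hz k i hk

lemma measurable_sInf_setOf_mem {α : Type*} [MeasurableSpace α] {A : ℕ → Set α}
    (hA : ∀ n, MeasurableSet (A n)) : Measurable fun x => sInf {n | x ∈ A n} := by
  classical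
  -- the second disjunct makes the search total, matching the junk value `sInf ∅ = 0`
  have hex : ∀ x, ∃ n, x ∈ A n ∨ x ∉ ⋃ m, A m := fun x => by
    by_cases hx : x ∈ ⋃ m, A m
    · exact (mem_iUnion.1 hx).imp fun _ => Or.inl
    · exact ⟨0, Or.inr hx⟩
  convert measurable_find hex fun n => (hA n).union (MeasurableSet.iUnion hA).compl
    using 2 with x
  by_cases hx : x ∈ ⋃ m, A m
  · rw [eq_comm, Nat.find_eq_iff]
    refine ⟨Or.inl (Nat.sInf_mem (mem_iUnion.1 hx)), fun n hn hA' => ?_⟩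
    exact Nat.notMem_of_lt_sInf hn (hA'.resolve_right (not_not.2 hx))
  · have : {n | x ∈ A n} = ∅ :=
      eq_empty_of_forall_notMem fun n hn => hx (mem_iUnion_of_mem n hn)
    rw [this, Nat.sInf_empty, eq_comm, Nat.find_eq_zero]
    exact Or.inr hx

lemma measurable_lexMin {X : Type*} [MeasurableSpace X] {F : X → Set (ℕ → ℕ)}
    (hF : ∀ C, IsClosed C → MeasurableSet {x | (F x ∩ C).Nonempty}) :
    Measurable fun x => lexMin (F x) := by
  refine measurable_pi_lambda _ fun k => ?_
  induction k using Nat.strong_induction_on with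
  | _ k ih =>
    have hstep : Measurable fun q : X × (Fin k → ℕ) => lexMinStep (F q.1) k q.2 := by
      refine measurable_from_prod_countable_left fun p => measurable_sInf_setOf_mem fun n => ?_
      refine hF {z | (∀ i : Fin k, z i = p i) ∧ z k = n} ?_
      simp only [ofPred_and, ofPred_forall]
      exact (isClosed_iInter fun i => isClosed_eq (continuous_apply _) continuous_const).inter
        (isClosed_eq (continuous_apply _) continuous_const)
    simp_rw [lexMin_apply (F _) k]
    exact hstep.comp (measurable_id.prodMk (measurable_pi_lambda _ fun i => ih i i.2))

lemma exists_measurable_forall_mem_iUnion {X Z : Type*} [MeasurableSpace X] [MeasurableSpace Z]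
    {B : ℕ → Set X} (hB : ∀ n, MeasurableSet (B n)) {s : ℕ → X → Z} (hs : ∀ n, Measurable (s n)) :
    ∃ f : X → Z, Measurable f ∧ ∀ x ∈ ⋃ n, B n, ∃ n, x ∈ B n ∧ f x = s n x := by
  obtain ⟨f, hf, hfs⟩ := exists_measurable_piecewise (disjointed B)
    (MeasurableSet.disjointed hB) s hs fun i j hij => by
      simp [(disjoint_disjointed B hij).inter_eq]
  refine ⟨f, hf, fun x hx => ?_⟩
  rw [← iUnion_disjointed] at hx
  obtain ⟨n, hn⟩ := mem_iUnion.1 hx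
  exact ⟨n, disjointed_subset B n hn, hfs n hn⟩

lemma exists_measure_iUnion_le_add {α : Type*} [MeasurableSpace α] (μ : Measure α)
    [IsFiniteMeasure μ] {s : ℕ → Set α} (hs : Monotone s) {δ : ℝ≥0∞} (hδ : δ ≠ 0) :
    ∃ n, μ (⋃ n, s n) ≤ μ (s n) + δ := by
  rcases eq_or_ne (μ (⋃ n, s n)) 0 with h0 | h0
  · exact ⟨0, by simp [h0]⟩
  have hlt : μ (⋃ n, s n) - δ < μ (⋃ n, s n) := ENNReal.sub_lt_self (measure_ne_top _ _) h0 hδ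
  rw [hs.measure_iUnion] at hlt ⊢
  obtain ⟨n, hn⟩ := lt_iSup_iff.1 hlt
  exact ⟨n, tsub_le_iff_right.1 hn.le⟩

lemma exists_measure_image_le_image_inter {α : Type*} [MeasurableSpace α] (μ : Measure α)
    [IsFiniteMeasure μ] (π : (ℕ → ℕ) → α) (T : Set (ℕ → ℕ)) (k : ℕ) {δ : ℝ≥0∞} (hδ : δ ≠ 0) :
    ∃ n, μ (π '' T) ≤ μ (π '' (T ∩ {z | z k ≤ n})) + δ := by
  have hT : π '' T = ⋃ n, π '' (T ∩ {z | z k ≤ n}) := by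
    rw [← image_iUnion, ← inter_iUnion, iUnion_eq_univ_iff.2 fun z => ⟨z k, le_refl (z k)⟩,
      inter_univ]
  rw [hT]
  exact exists_measure_iUnion_le_add μ
    (fun m n hmn => image_mono (inter_subset_inter_right _ fun z hz => hz.trans hmn)) hδ

lemma mem_image_pi_Iic_of_forall_mem_closure {X : Type*} [TopologicalSpace X] [T2Space X]
    [FirstCountableTopology X] {π : (ℕ → ℕ) → X} (hπ : Continuous π) {σ : ℕ → ℕ} {x : X}
    (hx : ∀ k, x ∈ closure (π '' {z | ∀ i < k, z i ≤ σ i})) :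
    x ∈ π '' univ.pi fun i => Iic (σ i) := by
  obtain ⟨u, hu⟩ := (𝓝 x).exists_antitone_basis
  have hz : ∀ k, ∃ z : ℕ → ℕ, (∀ i < k, z i ≤ σ i) ∧ π z ∈ u k := fun k => by
    obtain ⟨_, hy, z, hz, rfl⟩ := mem_closure_iff_nhds.1 (hx k) (u k) (hu.mem k)
    exact ⟨z, hz, hy⟩
  choose z hzσ hzu using hz
  obtain ⟨a, ha, φ, hφ, hya⟩ :=
    (isCompact_univ_pi fun i => (finite_Iic (σ i)).isCompact).tendsto_subseq
    (x := fun k i => min (z k i) (σ i)) fun k i _ => mem_Iic.2 (min_le_right _ _)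
  -- each coordinate of `z ∘ φ` is eventually that of the clamped sequence
  have hza : Tendsto (z ∘ φ) atTop (𝓝 a) := tendsto_pi_nhds.2 fun i =>
    (tendsto_pi_nhds.1 hya i).congr' (eventually_atTop.2 ⟨i + 1, fun j hj =>
      min_eq_left (hzσ _ i ((Nat.lt_of_succ_le hj).trans_le (hφ.id_le j)))⟩)
  exact ⟨a, ha, tendsto_nhds_unique ((hπ.tendsto a).comp hza)
    ((hu.tendsto hzu).comp hφ.tendsto_atTop)⟩

variable {X : Type*} [TopologicalSpace X] [T2Space X] [MeasurableSpace X]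
  [OpensMeasurableSpace X]

lemma exists_measurable_forall_mem_image_isCompact {π : (ℕ → ℕ) → X} (hπ : Continuous π)
    {K : Set (ℕ → ℕ)} (hK : IsCompact K) :
    ∃ s : X → ℕ → ℕ, Measurable s ∧ ∀ x ∈ π '' K, s x ∈ K ∧ π (s x) = x := by
  refine ⟨fun x => lexMin (K ∩ π ⁻¹' {x}), measurable_lexMin fun C hC => ?_, fun x hx => ?_⟩
  · have : {x | (K ∩ π ⁻¹' {x} ∩ C).Nonempty} = π '' (K ∩ C) := by
      ext x
      simp only [mem_ofPred_eq, mem_image, Set.Nonempty, mem_inter_iff, mem_preimage,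
        mem_singleton_iff]
      grind
    rw [this]
    exact ((hK.inter_right hC).image hπ).isClosed.measurableSet
  · obtain ⟨z, hzK, rfl⟩ := hx
    exact lexMin_mem (hK.isClosed.inter (isClosed_singleton.preimage hπ)) ⟨z, hzK, rfl⟩

theorem exists_isCompact_measure_range_le_image [FirstCountableTopology X]
    (μ : Measure X) [IsFiniteMeasure μ] {π : (ℕ → ℕ) → X} (hπ : Continuous π)
    {ε : ℝ≥0∞} (hε : ε ≠ 0) :
    ∃ K : Set (ℕ → ℕ), IsCompact K ∧ μ (range π) ≤ μ (π '' K) + ε := by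
  obtain ⟨δ, hδ0, hδε⟩ := ENNReal.exists_pos_sum_of_countable' hε ℕ
  choose N hN using fun T k => exists_measure_image_le_image_inter μ π T k (hδ0 k).ne'
  let T : ℕ → Set (ℕ → ℕ) := fun k => Nat.rec univ (fun k Tk => Tk ∩ {z | z k ≤ N Tk k}) k
  let σ : ℕ → ℕ := fun k => N (T k) k
  have hTσ : ∀ k, T k ⊆ {z | ∀ i < k, z i ≤ σ i} := by
    intro k
    induction k with
    | zero => exact fun z _ i hi => absurd hi i.not_lt_zero
    | succ k ih =>
      rintro z ⟨hzT, hzk⟩ i hi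
      rcases Nat.lt_succ_iff_lt_or_eq.1 hi with hi | rfl
      exacts [ih hzT i hi, hzk]
  have hμT : ∀ k, μ (range π) ≤ μ (π '' T k) + ∑ i ∈ Finset.range k, δ i := by
    intro k
    induction k with
    | zero => simp [T]
    | succ k ih =>
      rw [Finset.sum_range_succ, ← add_assoc, add_right_comm]
      exact ih.trans (add_le_add_left (hN (T k) k) _)
  let F : ℕ → Set X := fun k => closure (π '' {z | ∀ i < k, z i ≤ σ i})
  have hF : Antitone F := fun m n hmn =>
    closure_mono (image_mono fun z hz i hi => hz i (hi.trans_le hmn))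
  refine ⟨univ.pi fun i => Iic (σ i),
    isCompact_univ_pi fun i => (finite_Iic (σ i)).isCompact, ?_⟩
  calc μ (range π) ≤ (⨅ k, μ (F k)) + ε := by
        rw [ENNReal.iInf_add]
        refine le_iInf fun k => (hμT k).trans (add_le_add ?_ ?_)
        · exact measure_mono ((image_mono (hTσ k)).trans subset_closure)
        · exact (ENNReal.sum_le_tsum _).trans hδε.le
    _ = μ (⋂ k, F k) + ε := by
        rw [hF.measure_iInter (fun k => isClosed_closure.measurableSet.nullMeasurableSet)
          ⟨0, measure_ne_top μ _⟩]
    _ ≤ μ (π '' univ.pi fun i => Iic (σ i)) + ε := by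
        gcongr
        exact fun x hx => mem_image_pi_Iic_of_forall_mem_closure hπ (mem_iInter.1 hx)

theorem exists_isCompact_measure_compl_iUnion_image_eq_zero [FirstCountableTopology X]
    (μ : Measure X) [IsFiniteMeasure μ] {π : (ℕ → ℕ) → X} (hπ : Continuous π)
    (hμ : μ (range π)ᶜ = 0) :
    ∃ K : ℕ → Set (ℕ → ℕ), (∀ n, IsCompact (K n)) ∧ μ (⋃ n, π '' K n)ᶜ = 0 := by
  choose K hK hKμ using fun n : ℕ => exists_isCompact_measure_range_le_image μ hπ
    (ENNReal.inv_ne_zero.2 (ENNReal.natCast_ne_top n))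
  have hmeas : MeasurableSet (⋃ n, π '' K n) :=
    MeasurableSet.iUnion fun n => ((hK n).image hπ).isClosed.measurableSet
  have hle : μ univ ≤ μ (⋃ n, π '' K n) := calc
    μ univ ≤ μ (range π) + μ (range π)ᶜ := measure_univ_le_add_compl _
    _ = μ (range π) := by rw [hμ, add_zero]
    _ ≤ μ (⋃ n, π '' K n) := by
        have h := ENNReal.tendsto_inv_nat_nhds_zero.const_add (μ (⋃ n, π '' K n))
        rw [add_zero] at h
        refine ge_of_tendsto' h fun n => (hKμ n).trans ?_
        gcongr
        exact subset_iUnion (fun n => π '' K n) n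
  exact ⟨K, hK, by rw [measure_compl hmeas (measure_ne_top _ _), tsub_eq_zero_of_le hle]⟩

theorem exists_measurable_ae_section [FirstCountableTopology X]
    (μ : Measure X) [IsFiniteMeasure μ] {π : (ℕ → ℕ) → X} (hπ : Continuous π)
    (hμ : μ (range π)ᶜ = 0) :
    ∃ (K : ℕ → Set (ℕ → ℕ)) (s : X → ℕ → ℕ), (∀ n, IsCompact (K n)) ∧ Measurable s ∧
      ∀ᵐ x ∂μ, s x ∈ ⋃ n, K n ∧ π (s x) = x := by
  obtain ⟨K, hK, hKμ⟩ := exists_isCompact_measure_compl_iUnion_image_eq_zero μ hπ hμ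
  choose s hs hsK using fun n => exists_measurable_forall_mem_image_isCompact hπ (hK n)
  obtain ⟨f, hf, hfs⟩ := exists_measurable_forall_mem_iUnion
    (fun n => ((hK n).image hπ).isClosed.measurableSet) hs
  refine ⟨K, f, hK, hf, ?_⟩
  have hcover : ⋃ n, π '' K n ∈ ae μ := by
    simpa only [compl_compl] using compl_mem_ae_iff.2 hKμ
  filter_upwards [hcover] with x hx
  obtain ⟨n, hxn, hfx⟩ := hfs x hx
  rw [hfx]
  exact ⟨mem_iUnion_of_mem n (hsK n x hxn).1, (hsK n x hxn).2⟩

end Lubin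

open Lubin

/-- **Lubin's measure extension lemma.** If `X`, `Y` are Polish spaces,
`A ⊆ X × Y` is analytic, and `μ` is a Borel probability measure on `X` whose completion assigns
measure `1` to the projection of `A` to `X` (i.e. the complement of the projection is `μ`-null),
then there is a Borel probability measure `ν` on `X × Y` whose pushforward under the first
projection is `μ` and whose completion assigns measure `1` to `A` (the complement of `A` is
`ν`-null). -/
theorem stmt_1
    {X Y : Type} [TopologicalSpace X] [PolishSpace X] [MeasurableSpace X] [BorelSpace X]
    [TopologicalSpace Y] [PolishSpace Y] [MeasurableSpace Y] [BorelSpace Y]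
    (A : Set (X × Y)) (hA : MeasureTheory.AnalyticSet A)
    (μ : ProbabilityMeasure X)
    (hμ : (μ : Measure X) (Prod.fst '' A)ᶜ = 0) :
    ∃ ν : ProbabilityMeasure (X × Y),
      (ν : Measure (X × Y)).map Prod.fst = (μ : Measure X) ∧
      (ν : Measure (X × Y)) Aᶜ = 0 := by
  rw [AnalyticSet] at hA
  obtain rfl | ⟨g, hg, rfl⟩ := hA
  · simp at hμ
  obtain ⟨K, s, hK, hs, hsK⟩ := exists_measurable_ae_section (μ : Measure X)
    (continuous_fst.comp hg) (by rwa [range_comp])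
  have hgs : Measurable (g ∘ s) := hg.measurable.comp hs
  have hL : MeasurableSet (g '' ⋃ n, K n) := by
    rw [image_iUnion]
    exact MeasurableSet.iUnion fun n => ((hK n).image hg).isClosed.measurableSet
  refine ⟨μ.map hgs.aemeasurable, ?_, ?_⟩
  · rw [ProbabilityMeasure.toMeasure_map, Measure.map_map measurable_fst hgs]
    conv_rhs => rw [← Measure.map_id (μ := (μ : Measure X))]
    exact Measure.map_congr (hsK.mono fun x hx => hx.2)
  · rw [ProbabilityMeasure.toMeasure_map]
    refine measure_mono_null (compl_subset_compl.2 (image_subset_range g (⋃ n, K n))) ?_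
    rw [Measure.map_apply hgs hL.compl]
    exact ae_iff.1 (hsK.mono fun x hx => mem_image_of_mem g hx.1)
end

section
/- Let X₁, X₂ be Polish spaces and let E₁ ⊆ X₁ × Δ(X₂), E₂ ⊆ X₂ × Δ(X₁) be arbitrary relations. Define by transfinite recursion RAT⁰(E)_i = X_i, RAT^{α+1}(E)_i = { s ∈ RAT^α(E)_i : there exists μ ∈ Δ(X_j) with (s,μ) ∈ E_i and μ(RAT^α(E)_j) = 1 }, and RAT^λ(E)_i = ⋂_{β<λ} RAT^β(E)_i at limit ordinals λ. Then there exists an ordinal α with RAT^{α+1}(E)_i = RAT^α(E)_i for both i, and for the least such ordinal α one has RAT^α(E)₁ × RAT^α(E)₂ = RAT(E)₁ × RAT(E)₂. -/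
open MeasureTheory

/-- A rectangle `B₁ × B₂` is `E`-justified if every strategy in `B_i` is related by `E_i` to
some belief `μ ∈ Δ(X_j)` with `μ(B_j) = 1` (the complement of `B_j` is `μ`-null). -/
def EJustified {X₁ X₂ : Type} [MeasurableSpace X₁] [MeasurableSpace X₂]
    (E₁ : Set (X₁ × ProbabilityMeasure X₂)) (E₂ : Set (X₂ × ProbabilityMeasure X₁))
    (B₁ : Set X₁) (B₂ : Set X₂) : Prop :=
  (∀ s ∈ B₁, ∃ μ : ProbabilityMeasure X₂, (s, μ) ∈ E₁ ∧ (μ : Measure X₂) B₂ᶜ = 0) ∧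
  (∀ s ∈ B₂, ∃ μ : ProbabilityMeasure X₁, (s, μ) ∈ E₂ ∧ (μ : Measure X₁) B₁ᶜ = 0)

/-- `RAT(E)₁`: the union of the projections to `X₁` of all `E`-justified rectangles. -/
def RAT1 {X₁ X₂ : Type} [MeasurableSpace X₁] [MeasurableSpace X₂]
    (E₁ : Set (X₁ × ProbabilityMeasure X₂)) (E₂ : Set (X₂ × ProbabilityMeasure X₁)) :
    Set X₁ :=
  {s | ∃ B₁ : Set X₁, ∃ B₂ : Set X₂, EJustified E₁ E₂ B₁ B₂ ∧ s ∈ B₁}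

/-- `RAT(E)₂`: the union of the projections to `X₂` of all `E`-justified rectangles. -/
def RAT2 {X₁ X₂ : Type} [MeasurableSpace X₁] [MeasurableSpace X₂]
    (E₁ : Set (X₁ × ProbabilityMeasure X₂)) (E₂ : Set (X₂ × ProbabilityMeasure X₁)) :
    Set X₂ :=
  {s | ∃ B₁ : Set X₁, ∃ B₂ : Set X₂, EJustified E₁ E₂ B₁ B₂ ∧ s ∈ B₂}

/-!
`RAT(E)` is the greatest fixed point of the monotone operator sending a pair of sets `B` to the
strategies that have an `E`-belief concentrated on `B`; justified rectangles are exactly its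
post-fixed points. The elimination procedure is the transfinite approximation `gfpApprox` of this
greatest fixed point from `⊤`; intersecting with the previous stage is harmless because the
approximants decrease. A stage with `F (α + 1) = F α` is a fixed point, hence below the greatest
one, while every approximant lies above it; and some stage repeats, because there are more
ordinals than pairs of sets.
-/

open Set Order OrderHom OrdinalApprox Function

universe u

section Approximants

variable {L : Type u} [CompleteLattice L] (f : L →o L)

theorem eq_gfpApprox_top (F : Ordinal.{u} → L) (h0 : F 0 = ⊤)
    (hsucc : ∀ a, F (a + 1) = F a ⊓ f (F a))
    (hlim : ∀ a, IsSuccLimit a → F a = ⨅ b ∈ Iio a, F b) :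
    F = gfpApprox f ⊤ := by
  funext a
  induction a using WellFoundedLT.induction with
  | _ a ih =>
    rcases Ordinal.zero_or_succ_or_isSuccLimit a with rfl | ⟨b, rfl⟩ | ha
    · rw [h0, gfpApprox_zero]
    · rw [succ_eq_add_one, hsucc, ih b (lt_succ b), gfpApprox_add_one f le_top,
        inf_eq_right, ← gfpApprox_add_one f le_top]
      exact gfpApprox_anti_right f (le_add_right le_rfl)
    · rw [hlim a ha, gfpApprox_of_isSuccLimit f ha, iInf_subtype']
      exact iInf_congr fun b => ih b b.2

theorem exists_gfpApprox_add_one_eq {x : L} (hx : f x ≤ x) :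
    ∃ a, gfpApprox f x (a + 1) = gfpApprox f x a :=
  ⟨_, (gfpApprox_add_one f hx _).trans (gfpApprox_ord_mem_fixedPoint f hx)⟩

theorem gfpApprox_top_eq_gfp_of_add_one_eq {a : Ordinal}
    (ha : gfpApprox f ⊤ (a + 1) = gfpApprox f ⊤ a) : gfpApprox f ⊤ a = f.gfp := by
  have hfix : gfpApprox f ⊤ a ∈ fixedPoints f := (gfpApprox_add_one f le_top a).symm.trans ha
  exact le_antisymm (le_gfp f hfix.ge)
    (le_gfpApprox_of_mem_fixedPoints f (isFixedPt_gfp f) le_top a)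

end Approximants

section Justification

variable {X₁ X₂ : Type} [MeasurableSpace X₁] [MeasurableSpace X₂]
  (E₁ : Set (X₁ × ProbabilityMeasure X₂)) (E₂ : Set (X₂ × ProbabilityMeasure X₁))

def justification : Set X₁ × Set X₂ →o Set X₁ × Set X₂ where
  toFun B := ({s | ∃ μ : ProbabilityMeasure X₂, (s, μ) ∈ E₁ ∧ (μ : Measure X₂) B.2ᶜ = 0},
    {s | ∃ μ : ProbabilityMeasure X₁, (s, μ) ∈ E₂ ∧ (μ : Measure X₁) B.1ᶜ = 0})
  monotone' _ _ hBC :=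
    ⟨fun _ ⟨μ, hμ, hnull⟩ => ⟨μ, hμ, measure_mono_null (compl_subset_compl.2 hBC.2) hnull⟩,
      fun _ ⟨μ, hμ, hnull⟩ => ⟨μ, hμ, measure_mono_null (compl_subset_compl.2 hBC.1) hnull⟩⟩

theorem eJustified_iff_le_justification {B₁ : Set X₁} {B₂ : Set X₂} :
    EJustified E₁ E₂ B₁ B₂ ↔ (B₁, B₂) ≤ justification E₁ E₂ (B₁, B₂) := Iff.rfl

theorem le_rat_of_eJustified {B₁ : Set X₁} {B₂ : Set X₂} (hB : EJustified E₁ E₂ B₁ B₂) :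
    (B₁, B₂) ≤ (RAT1 E₁ E₂, RAT2 E₁ E₂) :=
  ⟨fun _ hs => ⟨B₁, B₂, hB, hs⟩, fun _ hs => ⟨B₁, B₂, hB, hs⟩⟩

theorem gfp_justification : (justification E₁ E₂).gfp = (RAT1 E₁ E₂, RAT2 E₁ E₂) := by
  refine le_antisymm (gfp_le _ fun B hB =>
    le_rat_of_eJustified E₁ E₂ ((eJustified_iff_le_justification E₁ E₂).2 hB)) (le_gfp _ ?_)
  refine ⟨fun s ⟨B₁, B₂, hB, hs⟩ => ?_, fun s ⟨B₁, B₂, hB, hs⟩ => ?_⟩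
  · exact ((justification E₁ E₂).mono (le_rat_of_eJustified E₁ E₂ hB)).1 (hB.1 s hs)
  · exact ((justification E₁ E₂).mono (le_rat_of_eJustified E₁ E₂ hB)).2 (hB.2 s hs)

end Justification

theorem stmt_3_general
    {X₁ X₂ : Type} [MeasurableSpace X₁]
    [MeasurableSpace X₂]
    (E₁ : Set (X₁ × ProbabilityMeasure X₂)) (E₂ : Set (X₂ × ProbabilityMeasure X₁))
    (F : Ordinal.{0} → Set X₁ × Set X₂)
    (h0 : F 0 = (Set.univ, Set.univ))
    (hsucc : ∀ α : Ordinal.{0},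
      (F (α + 1)).1 = {s ∈ (F α).1 | ∃ μ : ProbabilityMeasure X₂,
          (s, μ) ∈ E₁ ∧ (μ : Measure X₂) ((F α).2)ᶜ = 0} ∧
      (F (α + 1)).2 = {s ∈ (F α).2 | ∃ μ : ProbabilityMeasure X₁,
          (s, μ) ∈ E₂ ∧ (μ : Measure X₁) ((F α).1)ᶜ = 0})
    (hlim : ∀ α : Ordinal.{0}, Order.IsSuccLimit α →
      (F α).1 = ⋂ β ∈ Set.Iio α, (F β).1 ∧ (F α).2 = ⋂ β ∈ Set.Iio α, (F β).2) :
    (∃ α : Ordinal.{0}, F (α + 1) = F α) ∧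
    ∀ α : Ordinal.{0}, F (α + 1) = F α → (∀ β < α, F (β + 1) ≠ F β) →
      (F α).1 = RAT1 E₁ E₂ ∧ (F α).2 = RAT2 E₁ E₂ := by
  have hsucc' : ∀ a, F (a + 1) = F a ⊓ justification E₁ E₂ (F a) :=
    fun a => Prod.ext (hsucc a).1 (hsucc a).2
  have hlim' : ∀ a, IsSuccLimit a → F a = ⨅ b ∈ Iio a, F b := fun a ha =>
    Prod.ext (by simpa [Prod.fst_iInf] using (hlim a ha).1)
      (by simpa [Prod.snd_iInf] using (hlim a ha).2)
  obtain rfl := eq_gfpApprox_top _ F h0 hsucc' hlim'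
  refine ⟨exists_gfpApprox_add_one_eq _ le_top, fun a ha _ => ?_⟩
  rw [gfpApprox_top_eq_gfp_of_add_one_eq _ ha, gfp_justification]
  exact ⟨rfl, rfl⟩

/-- Let `F : Ordinal → Set X₁ × Set X₂` be the transfinite iteration of
elimination of non-`E`-justified strategies: `F 0 = (X₁, X₂)`, at successors keep those
strategies having an `E_i`-belief concentrated on the other player's surviving strategies, and
take intersections at limits.  Then the iteration reaches a fixed point, and at the least fixed
point the surviving sets are exactly `RAT(E)₁` and `RAT(E)₂`. -/
theorem stmt_3
    {X₁ X₂ : Type} [TopologicalSpace X₁] [PolishSpace X₁] [MeasurableSpace X₁] [BorelSpace X₁]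
    [TopologicalSpace X₂] [PolishSpace X₂] [MeasurableSpace X₂] [BorelSpace X₂]
    (E₁ : Set (X₁ × ProbabilityMeasure X₂)) (E₂ : Set (X₂ × ProbabilityMeasure X₁))
    (F : Ordinal.{0} → Set X₁ × Set X₂)
    (h0 : F 0 = (Set.univ, Set.univ))
    (hsucc : ∀ α : Ordinal.{0},
      (F (α + 1)).1 = {s ∈ (F α).1 | ∃ μ : ProbabilityMeasure X₂,
          (s, μ) ∈ E₁ ∧ (μ : Measure X₂) ((F α).2)ᶜ = 0} ∧
      (F (α + 1)).2 = {s ∈ (F α).2 | ∃ μ : ProbabilityMeasure X₁,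
          (s, μ) ∈ E₂ ∧ (μ : Measure X₁) ((F α).1)ᶜ = 0})
    (hlim : ∀ α : Ordinal.{0}, Order.IsSuccLimit α →
      (F α).1 = ⋂ β ∈ Set.Iio α, (F β).1 ∧ (F α).2 = ⋂ β ∈ Set.Iio α, (F β).2) :
    (∃ α : Ordinal.{0}, F (α + 1) = F α) ∧
    ∀ α : Ordinal.{0}, F (α + 1) = F α → (∀ β < α, F (β + 1) ≠ F β) →
      (F α).1 = RAT1 E₁ E₂ ∧ (F α).2 = RAT2 E₁ E₂ :=
  stmt_3_general E₁ E₂ F h0 hsucc hlim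
end

section
/- Let X and Y be nonempty compact Polish spaces, let π : X × Y → ℝ be continuous, let (Cₙ) be a decreasing sequence of closed subsets of Y, and let s ∈ X. Suppose that for every n there exists a Borel probability measure μₙ on Y with μₙ(Cₙ) = 1 such that s is a best response to μₙ. Then there exists a Borel probability measure μ on Y with μ(⋂ₙ Cₙ) = 1 such that s is a best response to μ. -/
/-!
For each `n`, the probability measures that are concentrated on `Cₙ` and to which `s` is a best
response form a closed set: concentration on a closed set passes to weak limits by the portmanteau
theorem, and best-response inequalities pass to weak limits because every `π (t, ·)` is bounded
and continuous. These sets decrease with `n` and are nonempty by hypothesis, and the space of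
probability measures on the compact space `Y` is compact (Prokhorov), so they have a common
element.
-/

open MeasureTheory Filter Topology

namespace MeasureTheory.ProbabilityMeasure

variable {Ω : Type*} [MeasurableSpace Ω] [TopologicalSpace Ω]

lemma isClosed_setOf_measure_compl_eq_zero [OpensMeasurableSpace Ω] [HasOuterApproxClosed Ω]
    {F : Set Ω} (hF : IsClosed F) :
    IsClosed {μ : ProbabilityMeasure Ω | (μ : Measure Ω) Fᶜ = 0} := by
  simp only [prob_compl_eq_zero_iff hF.measurableSet]
  refine isClosed_iff_frequently.mpr fun μ hμ ↦ le_antisymm prob_le_one ?_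
  calc 1 ≤ (𝓝 μ).limsup fun ν : ProbabilityMeasure Ω ↦ (ν : Measure Ω) F :=
        le_limsup_of_frequently_le' (hμ.mono fun _ hν ↦ hν.ge)
    _ ≤ (μ : Measure Ω) F := limsup_measure_closed_le_of_tendsto tendsto_id hF

lemma isClosed_setOf_forall_integral_le [CompactSpace Ω] [OpensMeasurableSpace Ω] {ι : Type*}
    {f : ι → Ω → ℝ} (hf : ∀ i, Continuous (f i)) (g : Ω → ℝ) (hg : Continuous g) :
    IsClosed {μ : ProbabilityMeasure Ω | ∀ i, ∫ y, f i y ∂(μ : Measure Ω) ≤ ∫ y, g y ∂μ} := by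
  simp only [Set.ofPred_forall]
  exact isClosed_iInter fun i ↦ isClosed_le
    (continuous_integral_continuousMap (⟨f i, hf i⟩ : C(Ω, ℝ)))
    (continuous_integral_continuousMap (⟨g, hg⟩ : C(Ω, ℝ)))

end MeasureTheory.ProbabilityMeasure

open ProbabilityMeasure in
theorem stmt_5_general
    {X Y : Type} [TopologicalSpace X]
    [TopologicalSpace Y] [PolishSpace Y] [CompactSpace Y]
    [MeasurableSpace Y] [BorelSpace Y]
    (π : X × Y → ℝ) (hπ : Continuous π)
    (C : ℕ → Set Y) (hclosed : ∀ n, IsClosed (C n)) (hdec : Antitone C) (s : X)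
    (h : ∀ n : ℕ, ∃ μ : ProbabilityMeasure Y, (μ : Measure Y) (C n)ᶜ = 0 ∧
      ∀ t : X, ∫ y, π (s, y) ∂(μ : Measure Y) ≥ ∫ y, π (t, y) ∂(μ : Measure Y)) :
    ∃ μ : ProbabilityMeasure Y, (μ : Measure Y) (⋂ n, C n)ᶜ = 0 ∧
      ∀ t : X, ∫ y, π (s, y) ∂(μ : Measure Y) ≥ ∫ y, π (t, y) ∂(μ : Measure Y) := by
  let K : ℕ → Set (ProbabilityMeasure Y) := fun n ↦
    {μ | (μ : Measure Y) (C n)ᶜ = 0} ∩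
      {μ | ∀ t : X, ∫ y, π (s, y) ∂(μ : Measure Y) ≥ ∫ y, π (t, y) ∂(μ : Measure Y)}
  have hK_closed (n : ℕ) : IsClosed (K n) :=
    (isClosed_setOf_measure_compl_eq_zero (hclosed n)).inter
      (isClosed_setOf_forall_integral_le (fun t ↦ by fun_prop) _ (by fun_prop))
  have hK_succ (n : ℕ) : K (n + 1) ⊆ K n := fun μ ⟨hμC, hμs⟩ ↦
    ⟨measure_mono_null (Set.compl_subset_compl.mpr (hdec n.le_succ)) hμC, hμs⟩
  obtain ⟨μ, hμ⟩ := IsCompact.nonempty_iInter_of_sequence_nonempty_isCompact_isClosed K hK_succ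
    (fun n ↦ h n) (hK_closed 0).isCompact hK_closed
  simp only [Set.mem_iInter] at hμ
  refine ⟨μ, ?_, (hμ 0).2⟩
  rw [Set.compl_iInter]
  exact measure_iUnion_null fun n ↦ (hμ n).1

/-- Let `X`, `Y` be nonempty compact Polish spaces, `π : X × Y → ℝ`
continuous, `(Cₙ)` a decreasing sequence of closed subsets of `Y`, and `s ∈ X`.  If for every
`n` there is a Borel probability measure `μₙ` with `μₙ(Cₙ) = 1` to which `s` is a best
response, then there is a Borel probability measure `μ` with `μ(⋂ₙ Cₙ) = 1` to which `s` is a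
best response. -/
theorem stmt_5
    {X Y : Type} [TopologicalSpace X] [PolishSpace X] [CompactSpace X] [Nonempty X]
    [MeasurableSpace X] [BorelSpace X]
    [TopologicalSpace Y] [PolishSpace Y] [CompactSpace Y] [Nonempty Y]
    [MeasurableSpace Y] [BorelSpace Y]
    (π : X × Y → ℝ) (hπ : Continuous π)
    (C : ℕ → Set Y) (hclosed : ∀ n, IsClosed (C n)) (hdec : Antitone C) (s : X)
    (h : ∀ n : ℕ, ∃ μ : ProbabilityMeasure Y, (μ : Measure Y) (C n)ᶜ = 0 ∧
      ∀ t : X, ∫ y, π (s, y) ∂(μ : Measure Y) ≥ ∫ y, π (t, y) ∂(μ : Measure Y)) :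
    ∃ μ : ProbabilityMeasure Y, (μ : Measure Y) (⋂ n, C n)ᶜ = 0 ∧
      ∀ t : X, ∫ y, π (s, y) ∂(μ : Measure Y) ≥ ∫ y, π (t, y) ∂(μ : Measure Y) :=
  stmt_5_general π hπ C hclosed hdec s h
end

section
/- The Measure Extension Axiom MEA is equivalent to the following statement: for all Polish spaces X, Y, every A ⊆ X × Y, and every Borel probability measure μ on X such that the complement of proj_X(A) is μ-null, there exist a Borel set B ⊆ X with μ(B) = 1 and a function f : X → Y, measurable with respect to the completion of μ, such that (x, f(x)) ∈ A for every x ∈ B. -/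
/-!
For `MEA → uniformization`, take the measure `ν` given by `MEA` and a Borel set `C ⊆ A` with
`ν Cᶜ = 0`. After a Borel embedding of `Y` into the compact complete linear order `EReal`, inner
regularity exhausts `C`, up to a null set, by countably many closed sets `F n`. Each projection
`Prod.fst '' F n` is closed, and on it `x ↦ sInf {t | (x, t) ∈ F n}` is a lower semicontinuous
selector of `F n`; gluing these along the first `n` that applies gives a Borel selector on a set
of full `μ`-measure.

Conversely, a selector `f` agrees `μ`-a.e. with a Borel `g`, and `ν` is the image of `μ` under
`x ↦ (x, g x)`. As this graph map is a measurable embedding, `ν Aᶜ` is computed exactly even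
though `A` need not be measurable.
-/

open MeasureTheory

/-- The Measure Extension Axiom `MEA`: for all Polish spaces `X`, `Y`, every set
`A ⊆ X × Y`, and every Borel probability measure `μ` on `X` such that the complement of the
projection `proj_X(A)` is `μ`-null, there is a Borel probability measure `ν` on `X × Y` whose
pushforward under the first projection is `μ` and such that the complement of `A` is `ν`-null. -/
def MEA : Prop :=
  ∀ (X Y : Type) [TopologicalSpace X] [TopologicalSpace Y] [PolishSpace X] [PolishSpace Y]
    [MeasurableSpace X] [MeasurableSpace Y] [BorelSpace X] [BorelSpace Y],
    ∀ (A : Set (X × Y)) (μ : ProbabilityMeasure X),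
      (μ : Measure X) (Prod.fst '' A)ᶜ = 0 →
      ∃ ν : ProbabilityMeasure (X × Y),
        (ν : Measure (X × Y)).map Prod.fst = (μ : Measure X) ∧
        (ν : Measure (X × Y)) Aᶜ = 0

open Set TopologicalSpace ENNReal

section Selection

variable {X I : Type*}

theorem MeasurableSet.exists_isClosed_measure_sdiff_iUnion_eq_zero [TopologicalSpace X]
    [MeasurableSpace X] [OpensMeasurableSpace X] {μ : Measure X} [μ.WeaklyRegular] {s : Set X}
    (hs : MeasurableSet s) (hμs : μ s ≠ ∞) :
    ∃ F : ℕ → Set X, (∀ n, F n ⊆ s) ∧ (∀ n, IsClosed (F n)) ∧ μ (s \ ⋃ n, F n) = 0 := by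
  choose F hFs hFcl hF using fun n : ℕ ↦
    hs.exists_isClosed_sdiff_lt hμs (ENNReal.inv_ne_zero.2 (ENNReal.natCast_ne_top n))
  refine ⟨F, hFs, hFcl, ?_⟩
  by_contra hpos
  obtain ⟨n, hn⟩ := ENNReal.exists_inv_nat_lt hpos
  exact ((measure_mono (sdiff_subset_sdiff_right (subset_iUnion F n))).trans_lt (hF n)).not_gt hn

variable [TopologicalSpace X] [CompleteLinearOrder I] [TopologicalSpace I] [OrderTopology I]

theorem IsClosed.mk_sInf_section_mem {F : Set (X × I)} (hF : IsClosed F) {x : X}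
    (hx : x ∈ Prod.fst '' F) : (x, sInf {t | (x, t) ∈ F}) ∈ F := by
  obtain ⟨p, hp, rfl⟩ := hx
  exact IsClosed.sInf_mem ⟨p.2, hp⟩ (hF.preimage (Continuous.prodMk_right p.1))

theorem IsClosed.lowerSemicontinuous_sInf_section {F : Set (X × I)} (hF : IsClosed F) :
    LowerSemicontinuous fun x ↦ sInf {t | (x, t) ∈ F} := by
  rw [lowerSemicontinuous_iff_isClosed_preimage]
  intro y
  rcases eq_or_ne y ⊤ with rfl | hy
  · simp
  convert isClosedMap_fst_of_compactSpace _ (hF.inter (isClosed_Iic.preimage continuous_snd))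
  ext x
  constructor
  · intro hx
    obtain ⟨t, ht⟩ : {t | (x, t) ∈ F}.Nonempty :=
      nonempty_iff_ne_empty.2 fun hempty ↦ hy (top_le_iff.1 (by simpa [hempty] using hx))
    exact ⟨_, ⟨hF.mk_sInf_section_mem ⟨_, ht, rfl⟩, hx⟩, rfl⟩
  · rintro ⟨p, ⟨hpF, hpy⟩, rfl⟩
    exact (sInf_le (s := {t | (p.1, t) ∈ F}) hpF).trans hpy

variable [PseudoMetrizableSpace X] [MeasurableSpace X] [BorelSpace X] [PseudoMetrizableSpace I]
  [SecondCountableTopology I] [MeasurableSpace I] [BorelSpace I]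

theorem exists_measurable_selection_of_completeLinearOrder (ν : Measure (X × I))
    [IsFiniteMeasure ν] {C : Set (X × I)} (hC : MeasurableSet C) (hνC : ν Cᶜ = 0) :
    ∃ B : Set X, MeasurableSet B ∧ ν.map Prod.fst Bᶜ = 0 ∧
      ∃ g : X → I, Measurable g ∧ ∀ x ∈ B, (x, g x) ∈ C := by
  classical
  obtain ⟨F, hFC, hFcl, hF⟩ := hC.exists_isClosed_measure_sdiff_iUnion_eq_zero (measure_ne_top ν C)
  set D : ℕ → Set X := fun n ↦ Prod.fst '' F n
  have hDcl (n : ℕ) : IsClosed (D n) := isClosedMap_fst_of_compactSpace _ (hFcl n)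
  have hB : MeasurableSet (⋃ n, D n) := .iUnion fun n ↦ (hDcl n).measurableSet
  have hpiece (x : X) : ∃ n, x ∈ D n ∨ x ∉ ⋃ n, D n := by
    by_cases hx : x ∈ ⋃ n, D n
    · exact (mem_iUnion.1 hx).imp fun _ ↦ Or.inl
    · exact ⟨0, Or.inr hx⟩
  refine ⟨⋃ n, D n, hB, ?_, fun x ↦ sInf {t | (x, t) ∈ F (Nat.find (hpiece x))},
    Measurable.find (p := fun n x ↦ x ∈ D n ∨ x ∉ ⋃ n, D n)
      (fun n ↦ (hFcl n).lowerSemicontinuous_sInf_section.measurable)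
      (fun n ↦ (hDcl n).measurableSet.union hB.compl) hpiece, fun x hx ↦ ?_⟩
  · rw [Measure.map_apply measurable_fst hB.compl]
    refine measure_mono_null (fun p hp ↦ ?_) (measure_union_null hF hνC)
    by_cases hpC : p ∈ C
    · exact Or.inl ⟨hpC, fun hpF ↦ hp (mem_iUnion.2 ((mem_iUnion.1 hpF).imp
        fun n hn ↦ mem_image_of_mem Prod.fst hn))⟩
    · exact Or.inr hpC
  · have hxD := (Nat.find_spec (hpiece x)).resolve_right (not_not.2 hx)
    exact hFC _ ((hFcl _).mk_sInf_section_mem hxD)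

end Selection

theorem exists_measurable_selection {X Y : Type*} [TopologicalSpace X] [PseudoMetrizableSpace X]
    [MeasurableSpace X] [BorelSpace X] [MeasurableSpace Y] [StandardBorelSpace Y] [Nonempty Y]
    (ν : Measure (X × Y)) [IsFiniteMeasure ν] {A : Set (X × Y)} (hνA : ν Aᶜ = 0) :
    ∃ B : Set X, MeasurableSet B ∧ ν.map Prod.fst Bᶜ = 0 ∧
      ∃ f : X → Y, Measurable f ∧ ∀ x ∈ B, (x, f x) ∈ A := by
  obtain ⟨e, he⟩ : ∃ e : Y → EReal, MeasurableEmbedding e :=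
    let ⟨e₀, he₀⟩ := exists_measurableEmbedding_real Y
    ⟨_, EReal.measurableEmbedding_coe.comp he₀⟩
  obtain ⟨r, hr, hre⟩ := he.exists_measurable_extend measurable_id fun _ ↦ inferInstance
  have hG : MeasurableEmbedding (Prod.map id e) := (MeasurableEmbedding.id (α := X)).prodMap he
  have hSA : (toMeasurable ν Aᶜ)ᶜ ⊆ A := compl_subset_comm.1 (subset_toMeasurable ν Aᶜ)
  obtain ⟨B, hB, hB0, g, hg, hgS⟩ := exists_measurable_selection_of_completeLinearOrder
    (ν.map (Prod.map id e)) (hG.measurableSet_image' (measurableSet_toMeasurable ν Aᶜ).compl)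
    (by rw [hG.map_apply, preimage_compl, preimage_image_eq _ hG.injective, compl_compl,
      measure_toMeasurable, hνA])
  rw [Measure.map_map measurable_fst hG.measurable] at hB0
  refine ⟨B, hB, hB0, r ∘ g, hr.comp hg, fun x hx ↦ ?_⟩
  obtain ⟨⟨x', y⟩, hyS, hxy⟩ := hgS x hx
  obtain ⟨rfl, hy⟩ := Prod.mk.inj hxy
  have hgy : r (g x') = y := hy ▸ congrFun hre y
  simpa [hgy] using hSA hyS

theorem measurableEmbedding_graph {X Y : Type*} [MeasurableSpace X] [MeasurableSpace Y]
    [MeasurableEq Y] {g : X → Y} (hg : Measurable g) : MeasurableEmbedding fun x ↦ (x, g x) := by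
  refine .of_measurable_inverse (measurable_id.prodMk hg) ?_ measurable_fst fun _ ↦ rfl
  convert measurableSet_eq_fun (hg.comp measurable_fst) measurable_snd
  ext p
  exact ⟨by rintro ⟨x, rfl⟩; rfl, fun hp ↦ ⟨p.1, Prod.ext rfl hp⟩⟩

theorem map_fst_map_graph {X Y : Type*} [MeasurableSpace X] [MeasurableSpace Y] (μ : Measure X)
    {g : X → Y} (hg : Measurable g) : (μ.map fun x ↦ (x, g x)).map Prod.fst = μ := by
  have hgr : Measurable fun x ↦ (x, g x) := measurable_id.prodMk hg
  rw [Measure.map_map measurable_fst hgr]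
  exact Measure.map_id

theorem map_graph_apply_compl_eq_zero {X Y : Type*} [MeasurableSpace X] [MeasurableSpace Y]
    [MeasurableEq Y] {μ : Measure X} {g : X → Y} (hg : Measurable g) {A : Set (X × Y)}
    (hA : ∀ᵐ x ∂μ, (x, g x) ∈ A) : μ.map (fun x ↦ (x, g x)) Aᶜ = 0 := by
  rwa [(measurableEmbedding_graph hg).map_apply]

/-- `MEA` is equivalent to the following almost-everywhere uniformization
statement: for all Polish spaces `X`, `Y`, every `A ⊆ X × Y`, and every Borel probability
measure `μ` on `X` such that the complement of `proj_X(A)` is `μ`-null, there are a Borel set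
`B ⊆ X` with `μ(B) = 1` and a function `f : X → Y`, measurable with respect to the completion
of `μ`, with `(x, f x) ∈ A` for every `x ∈ B`. -/
theorem stmt_6 : MEA ↔
    (∀ (X Y : Type) [TopologicalSpace X] [TopologicalSpace Y] [PolishSpace X] [PolishSpace Y]
      [MeasurableSpace X] [MeasurableSpace Y] [BorelSpace X] [BorelSpace Y],
      ∀ (A : Set (X × Y)) (μ : ProbabilityMeasure X),
        (μ : Measure X) (Prod.fst '' A)ᶜ = 0 →
        ∃ B : Set X, MeasurableSet B ∧ (μ : Measure X) B = 1 ∧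
          ∃ f : X → Y, NullMeasurable f (μ : Measure X) ∧ ∀ x ∈ B, (x, f x) ∈ A) := by
  constructor
  · intro hMEA X Y _ _ _ _ _ _ _ _ A μ hA
    obtain ⟨ν, hνμ, hνA⟩ := hMEA X Y A μ hA
    have : Nonempty Y := ν.nonempty.map Prod.snd
    obtain ⟨B, hB, hB0, f, hf, hfA⟩ := exists_measurable_selection (ν : Measure (X × Y)) hνA
    rw [hνμ] at hB0
    exact ⟨B, hB, (prob_compl_eq_zero_iff hB).1 hB0, f, hf.nullMeasurable, hfA⟩
  · intro hsel X Y _ _ _ _ _ _ _ _ A μ hA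
    obtain ⟨B, hB, hμB, f, hf, hfA⟩ := hsel X Y A μ hA
    have hg := hf.aemeasurable.measurable_mk
    have hgA : ∀ᵐ x ∂(μ : Measure X), (x, hf.aemeasurable.mk f x) ∈ A := by
      filter_upwards [(prob_compl_eq_zero_iff hB).2 hμB, hf.aemeasurable.ae_eq_mk] with x hxB hfx
      exact hfx ▸ hfA x hxB
    exact ⟨⟨_, Measure.isProbabilityMeasure_map (measurable_id.prodMk hg).aemeasurable⟩,
      map_fst_map_graph _ hg, map_graph_apply_compl_eq_zero hg hgA⟩
end

section
/- Assume the Measure Extension Axiom MEA. Then every subset of every Polish space is universally measurable; that is, for every Polish space X, every S ⊆ X, and every Borel probability measure μ on X, the set S is measurable with respect to the completion of μ (S is μ-null-measurable). -/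
open MeasureTheory

/-- Assuming `MEA`, every subset of every Polish space is universally
measurable: for every Polish space `X`, every `S ⊆ X`, and every Borel probability measure `μ`
on `X`, the set `S` is measurable with respect to the completion of `μ`. -/
theorem stmt_7 (h : MEA) :
    ∀ (X : Type) [TopologicalSpace X] [PolishSpace X] [MeasurableSpace X] [BorelSpace X],
      ∀ (S : Set X) (μ : ProbabilityMeasure X),
        NullMeasurableSet S (μ : Measure X) := by

  intro X _ _ _ _ S μ
  set A : Set (X × Bool) := {p | p.1 ∈ S ↔ p.2 = true} with hA
  have hproj : (μ : Measure X) (Prod.fst '' A)ᶜ = 0 := by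
    have : Prod.fst '' A = Set.univ := by
      ext x
      simp only [Set.mem_image, Set.mem_univ, iff_true]
      by_cases hx : x ∈ S
      · exact ⟨(x, true), by simp [hA, hx], rfl⟩
      · exact ⟨(x, false), by simp [hA, hx], rfl⟩
    simp [this]
  obtain ⟨ν, hmap, hnull⟩ := h X Bool A μ hproj
  set N := toMeasurable (ν : Measure (X × Bool)) Aᶜ with hN
  have hNmeas : MeasurableSet N := measurableSet_toMeasurable _ _
  have hNnull : (ν : Measure (X × Bool)) N = 0 := by
    rw [hN, measure_toMeasurable]; exact hnull
  -- sections of N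
  set T : Set X := {x | (x, false) ∈ N} with hT
  set T' : Set X := {x | (x, true) ∈ N} with hT'
  have hTmeas : MeasurableSet T := hNmeas.preimage (measurable_prodMk_right : Measurable fun x : X => (x, false))
  have hT'meas : MeasurableSet T' := hNmeas.preimage (measurable_prodMk_right : Measurable fun x : X => (x, true))
  have hST : S ⊆ T := fun x hx => subset_toMeasurable _ _ (by simp [hA, hx])
  have hST' : Sᶜ ⊆ T' := fun x hx => subset_toMeasurable _ _ (by simp [hA]; exact hx)
  refine ⟨T'ᶜ, hT'meas.compl, ?_⟩
  have hE : T'ᶜ ⊆ S := fun x hx => by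
    by_contra hxS; exact hx (hST' hxS)
  have hkey : (μ : Measure X) (T ∩ T') = 0 := by
    have hm : MeasurableSet (T ∩ T') := hTmeas.inter hT'meas
    have hma : Measure.map Prod.fst (ν : Measure (X × Bool)) (T ∩ T')
        = (ν : Measure (X × Bool)) (Prod.fst ⁻¹' (T ∩ T')) :=
      Measure.map_apply (measurable_fst (α := X) (β := Bool)) hm
    rw [hmap] at hma
    rw [hma]
    have hsub : (Prod.fst ⁻¹' (T ∩ T') : Set (X × Bool)) ⊆ N := by
      rintro ⟨x, b⟩ ⟨hx1, hx2⟩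
      cases b
      · exact hx1
      · exact hx2
    exact measure_mono_null hsub hNnull
  have hdiff : (μ : Measure X) (S \ T'ᶜ) = 0 := by
    refine measure_mono_null ?_ hkey
    intro x hx
    exact ⟨hST hx.1, not_not.mp hx.2⟩
  have hge : (μ : Measure X) S ≤ (μ : Measure X) T'ᶜ := by
    calc (μ : Measure X) S ≤ (μ : Measure X) (T'ᶜ ∪ (S \ T'ᶜ)) := by
          apply measure_mono; intro x hx
          by_cases hx2 : x ∈ T'ᶜ
          · exact Or.inl hx2
          · exact Or.inr ⟨hx, hx2⟩
      _ ≤ (μ : Measure X) T'ᶜ + (μ : Measure X) (S \ T'ᶜ) := measure_union_le _ _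
      _ = (μ : Measure X) T'ᶜ := by rw [hdiff, add_zero]
  have heq : T'ᶜ =ᵐ[(μ : Measure X)] S :=
    ae_eq_of_subset_of_measure_ge hE hge hT'meas.compl.nullMeasurableSet (measure_ne_top _ _)
  exact heq.symm
end

section
/- Let X and Y be locally compact Polish spaces and let π : X × Y → ℝ be bounded and of Baire class one (i.e., π is the pointwise limit of a sequence of continuous functions on X × Y). Then the best response relation E^π = {(s,μ) ∈ X × Δ(Y) : ∫ π(s,y) dμ(y) ≥ ∫ π(t,y) dμ(y) for all t ∈ X} is a Borel subset of X × Δ(Y). -/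
/-!
Truncating the approximating continuous functions at the bound of `π` makes them uniformly
bounded, so by dominated convergence `G (s, μ) = ∫ π (s, y) dμ` is the pointwise limit of the maps
`(s, μ) ↦ ∫ Fₙ (s, y) dμ = ∫ Fₙ d(δₛ ⊗ μ)`, which are continuous because `(s, μ) ↦ δₛ ⊗ μ` is.
The best response relation is `⋂_{q ∈ ℚ} ({(s, μ) | ∃ t, q < G (t, μ)}ᶜ ∪ {q < G})`. A strict
superlevel set of a pointwise limit of continuous functions is a countable union of closed sets,
and since `X` is σ-compact, projecting out the `X`-coordinate keeps it a countable union of closed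
sets, hence Borel.
-/

open MeasureTheory Filter Topology BoundedContinuousFunction

theorem exists_boundedContinuous_tendsto_of_abs_le {W : Type*} [TopologicalSpace W]
    {π : W → ℝ} {M : ℝ} (hM : ∀ w, |π w| ≤ M) {f : ℕ → W → ℝ} (hf : ∀ n, Continuous (f n))
    (hfπ : ∀ w, Tendsto (fun n => f n w) atTop (𝓝 (π w))) :
    ∃ F : ℕ → W →ᵇ ℝ, (∀ n w, ‖F n w‖ ≤ M) ∧ ∀ w, Tendsto (fun n => F n w) atTop (𝓝 (π w)) := by
  set clamp : ℝ → ℝ := fun x => max (-M) (min M x)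
  have hclamp : Continuous clamp := by fun_prop
  have hbound : ∀ n w, ‖clamp (f n w)‖ ≤ M := fun n w => by
    have hM0 : 0 ≤ M := (abs_nonneg _).trans (hM w)
    exact abs_le.mpr ⟨le_max_left _ _, max_le (by linarith) (min_le_left _ _)⟩
  refine ⟨fun n => .ofNormedAddCommGroup _ (hclamp.comp (hf n)) M (hbound n), hbound, fun w => ?_⟩
  have hfix : clamp (π w) = π w := by
    obtain ⟨h₁, h₂⟩ := abs_le.mp (hM w)
    simp only [clamp, min_eq_right h₂, max_eq_right h₁]
  exact hfix ▸ (hclamp.tendsto (π w)).comp (hfπ w)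

theorem continuous_integral_prodMk {X Y : Type*} [TopologicalSpace X] [MeasurableSpace X]
    [OpensMeasurableSpace X] [SecondCountableTopology X] [TopologicalSpace.PseudoMetrizableSpace X]
    [TopologicalSpace Y] [MeasurableSpace Y] [OpensMeasurableSpace Y]
    [SecondCountableTopology Y] [TopologicalSpace.PseudoMetrizableSpace Y] (F : X × Y →ᵇ ℝ) :
    Continuous fun p : X × ProbabilityMeasure Y => ∫ y, F (p.1, y) ∂(p.2 : Measure Y) := by
  have h : ∀ p : X × ProbabilityMeasure Y, ∫ y, F (p.1, y) ∂(p.2 : Measure Y) =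
      ∫ z, F z ∂((diracProba p.1).prod p.2 : Measure (X × Y)) := fun p => by
    rw [ProbabilityMeasure.toMeasure_prod, diracProba, ProbabilityMeasure.coe_mk,
      Measure.dirac_prod, integral_map measurable_prodMk_left.aemeasurable
        F.continuous.aestronglyMeasurable]
  simp_rw [h]
  exact (ProbabilityMeasure.continuous_integral_boundedContinuousFunction F).comp
    (ProbabilityMeasure.continuous_prod.comp (continuous_diracProba.prodMap continuous_id))

theorem setOf_lt_eq_iUnion_of_tendsto {W : Type*} {g : ℕ → W → ℝ} {G : W → ℝ}
    (hG : ∀ w, Tendsto (fun n => g n w) atTop (𝓝 (G w))) (c : ℝ) :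
    {w | c < G w} = ⋃ (k : ℕ) (m : ℕ), {w | ∀ n ≥ m, c + 1 / (k + 1) ≤ g n w} := by
  ext w
  simp only [Set.mem_ofPred_eq, Set.mem_iUnion]
  constructor
  · intro hw
    obtain ⟨k, hk⟩ := exists_nat_one_div_lt (sub_pos.mpr hw)
    have hck : c + 1 / (k + 1) < G w := by linarith
    obtain ⟨m, hm⟩ := eventually_atTop.mp ((hG w).eventually_const_lt hck)
    exact ⟨k, m, fun n hn => (hm n hn).le⟩
  · rintro ⟨k, m, hm⟩
    have : c + 1 / (k + 1) ≤ G w := ge_of_tendsto (hG w) (eventually_atTop.mpr ⟨m, hm⟩)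
    have : (0 : ℝ) < 1 / (k + 1) := by positivity
    linarith

section Projection

variable {X Z : Type*} [TopologicalSpace X] [TopologicalSpace Z]

theorem IsCompact.isClosed_setOf_exists_prod_mem {K : Set X} (hK : IsCompact K)
    {S : Set (X × Z)} (hS : IsClosed S) : IsClosed {z | ∃ x ∈ K, (x, z) ∈ S} := by
  have : CompactSpace K := isCompact_iff_compactSpace.mp hK
  have hS' : IsClosed {r : K × Z | ((r.1 : X), r.2) ∈ S} :=
    hS.preimage (continuous_subtype_val.prodMap continuous_id)
  convert isClosedMap_snd_of_compactSpace _ hS' using 1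
  ext z
  simp

theorem measurableSet_setOf_exists_prod_mem [SigmaCompactSpace X]
    [MeasurableSpace (X × Z)] [OpensMeasurableSpace (X × Z)] {S : Set (X × Z)}
    (hS : IsClosed S) : MeasurableSet {p : X × Z | ∃ x, (x, p.2) ∈ S} := by
  have h : {p : X × Z | ∃ x, (x, p.2) ∈ S} =
      ⋃ j, Prod.snd ⁻¹' {z | ∃ x ∈ compactCovering X j, (x, z) ∈ S} := by
    ext p
    simp only [Set.mem_ofPred_eq, Set.mem_iUnion, Set.mem_preimage]
    constructor
    · rintro ⟨x, hx⟩
      obtain ⟨j, hj⟩ := exists_mem_compactCovering x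
      exact ⟨j, x, hj, hx⟩
    · rintro ⟨j, x, -, hx⟩
      exact ⟨x, hx⟩
  rw [h]
  exact .iUnion fun j =>
    (((isCompact_compactCovering X j).isClosed_setOf_exists_prod_mem hS).preimage
      continuous_snd).measurableSet

theorem measurableSet_setOf_exists_lt_of_tendsto [SigmaCompactSpace X]
    [MeasurableSpace (X × Z)] [OpensMeasurableSpace (X × Z)] {g : ℕ → X × Z → ℝ} {G : X × Z → ℝ}
    (hg : ∀ n, Continuous (g n)) (hG : ∀ p, Tendsto (fun n => g n p) atTop (𝓝 (G p))) (c : ℝ) :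
    MeasurableSet {p : X × Z | ∃ x, c < G (x, p.2)} := by
  have h : {p : X × Z | ∃ x, c < G (x, p.2)} = ⋃ (k : ℕ) (m : ℕ),
      {p : X × Z | ∃ x, (x, p.2) ∈ {w | ∀ n ≥ m, c + 1 / (k + 1) ≤ g n w}} := by
    ext p
    have hp x := Set.ext_iff.mp (setOf_lt_eq_iUnion_of_tendsto hG c) (x, p.2)
    simp only [Set.mem_ofPred_eq, Set.mem_iUnion] at hp ⊢
    simp only [hp]
    exact ⟨fun ⟨x, k, m, h⟩ => ⟨k, m, x, h⟩, fun ⟨k, m, x, h⟩ => ⟨x, k, m, h⟩⟩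
  rw [h]
  refine .iUnion fun k => .iUnion fun m => measurableSet_setOf_exists_prod_mem ?_
  simp only [Set.ofPred_forall]
  exact isClosed_iInter fun n => isClosed_iInter fun _ => isClosed_le continuous_const (hg n)

end Projection

section BestResponse

variable {X Z : Type*}

def bestResponse (G : X × Z → ℝ) : Set (X × Z) := {p | ∀ t, G (t, p.2) ≤ G p}

theorem bestResponse_eq_iInter_rat (G : X × Z → ℝ) :
    bestResponse G = ⋂ q : ℚ, {p | ∃ t, q < G (t, p.2)}ᶜ ∪ {p | q < G p} := by
  ext p
  simp only [bestResponse, Set.mem_iInter, Set.mem_union, Set.mem_compl_iff, Set.mem_ofPred_eq]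
  constructor
  · rintro hp q
    by_cases h : ∃ t, q < G (t, p.2)
    · obtain ⟨t, ht⟩ := h
      exact Or.inr (ht.trans_le (hp t))
    · exact Or.inl h
  · intro hp t
    by_contra! hlt
    obtain ⟨q, hpq, hqt⟩ := exists_rat_btwn hlt
    rcases hp q with h | h
    · exact h ⟨t, hqt⟩
    · exact lt_asymm h hpq

theorem measurableSet_bestResponse_of_tendsto [TopologicalSpace X] [TopologicalSpace Z]
    [SigmaCompactSpace X] [MeasurableSpace (X × Z)] [OpensMeasurableSpace (X × Z)]
    {g : ℕ → X × Z → ℝ} {G : X × Z → ℝ} (hg : ∀ n, Continuous (g n))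
    (hG : ∀ p, Tendsto (fun n => g n p) atTop (𝓝 (G p))) :
    MeasurableSet (bestResponse G) := by
  have hGm : Measurable G :=
    measurable_of_tendsto_metrizable (fun n => (hg n).measurable) (tendsto_pi_nhds.mpr hG)
  rw [bestResponse_eq_iInter_rat]
  exact .iInter fun q =>
    (measurableSet_setOf_exists_lt_of_tendsto hg hG q).compl.union (hGm measurableSet_Ioi)

end BestResponse

theorem stmt_12_general
    {X Y : Type}
    [TopologicalSpace X] [PolishSpace X] [LocallyCompactSpace X]
    [MeasurableSpace X] [BorelSpace X]
    [TopologicalSpace Y] [PolishSpace Y]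
    [MeasurableSpace Y] [BorelSpace Y]
    (π : X × Y → ℝ)
    (hbd : ∃ M : ℝ, ∀ p : X × Y, |π p| ≤ M)
    (hBaire1 : ∃ f : ℕ → X × Y → ℝ, (∀ n, Continuous (f n)) ∧
      ∀ p : X × Y, Filter.Tendsto (fun n => f n p) Filter.atTop (nhds (π p))) :
    MeasurableSet[borel (X × ProbabilityMeasure Y)]
      {p : X × ProbabilityMeasure Y | ∀ t : X,
        ∫ y, π (p.1, y) ∂(p.2 : Measure Y) ≥ ∫ y, π (t, y) ∂(p.2 : Measure Y)} := by
  obtain ⟨M, hM⟩ := hbd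
  obtain ⟨f, hf, hfπ⟩ := hBaire1
  obtain ⟨F, hFM, hFπ⟩ := exists_boundedContinuous_tendsto_of_abs_le hM hf hfπ
  let : MeasurableSpace (X × ProbabilityMeasure Y) := borel _
  have : BorelSpace (X × ProbabilityMeasure Y) := ⟨rfl⟩
  refine measurableSet_bestResponse_of_tendsto
    (G := fun p : X × ProbabilityMeasure Y => ∫ y, π (p.1, y) ∂(p.2 : Measure Y))
    (fun n => continuous_integral_prodMk (F n)) ?_
  rintro ⟨s, μ⟩
  exact tendsto_integral_of_dominated_convergence (fun _ => M)
    (fun n => ((F n).continuous.comp (Continuous.prodMk_right s)).aestronglyMeasurable)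
    (integrable_const M) (fun n => ae_of_all _ fun y => hFM n (s, y))
    (ae_of_all _ fun y => hFπ (s, y))

/-- Let `X`, `Y` be locally compact Polish spaces and `π : X × Y → ℝ` be
bounded and of Baire class one (a pointwise limit of a sequence of continuous functions).
Then the best response relation
`E^π = {(s, μ) ∈ X × Δ(Y) : ∫ π(s,y) dμ ≥ ∫ π(t,y) dμ for all t ∈ X}` is a Borel subset of
`X × Δ(Y)` (for the Borel σ-algebra of the product of the topology of `X` with the topology of
weak convergence on `Δ(Y)`). -/
theorem stmt_12
    {X Y : Type}
    [TopologicalSpace X] [PolishSpace X] [LocallyCompactSpace X]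
    [MeasurableSpace X] [BorelSpace X]
    [TopologicalSpace Y] [PolishSpace Y] [LocallyCompactSpace Y]
    [MeasurableSpace Y] [BorelSpace Y]
    (π : X × Y → ℝ)
    (hbd : ∃ M : ℝ, ∀ p : X × Y, |π p| ≤ M)
    (hBaire1 : ∃ f : ℕ → X × Y → ℝ, (∀ n, Continuous (f n)) ∧
      ∀ p : X × Y, Filter.Tendsto (fun n => f n p) Filter.atTop (nhds (π p))) :
    MeasurableSet[borel (X × ProbabilityMeasure Y)]
      {p : X × ProbabilityMeasure Y | ∀ t : X,
        ∫ y, π (p.1, y) ∂(p.2 : Measure Y) ≥ ∫ y, π (t, y) ∂(p.2 : Measure Y)} :=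
  stmt_12_general π hbd hBaire1
end

section
/- Let X be a Polish space, let μ be a Borel probability measure on X, and let A denote the set of isolated points of X. Then there exists a meager set H ⊆ X with μ(H) = 1 if and only if μ(A) = 0. -/
/-!
Isolated points are never meagre in a Baire space, so a meagre set of full measure forces the
isolated points to be null. Conversely, split `μ` into its atoms and an atomless part. The atoms
form a countable set, and if the isolated points are null then no atom is isolated, so in a
`T₁` space the atoms form a meagre set. An atomless outer regular measure on a separable space
lives on a meagre set: around each point of a countable dense set pick an open set of tiny
measure; the union is a dense open set of measure `< ε`, and intersecting such sets for
`ε = 1/n` gives a dense `G_δ` null set.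
-/

open MeasureTheory Set TopologicalSpace ENNReal

section Topology

variable {X : Type*} [TopologicalSpace X]

theorem IsMeagre.notMem_of_isOpen_singleton [BaireSpace X] {s : Set X} {x : X}
    (hs : IsMeagre s) (hx : IsOpen ({x} : Set X)) : x ∉ s := fun hxs =>
  not_isMeagre_of_isOpen hx (singleton_nonempty x) (hs.mono (singleton_subset_iff.2 hxs))

theorem Set.Countable.isMeagre_of_forall_not_isOpen_singleton [T1Space X] {s : Set X}
    (hs : s.Countable) (h : ∀ x ∈ s, ¬IsOpen ({x} : Set X)) : IsMeagre s := by
  rw [← biUnion_of_singleton s]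
  exact isMeagre_biUnion hs fun x hx => IsNowhereDense.isMeagre <|
    isClosed_singleton.isNowhereDense_iff.2 <| interior_eq_empty_iff_dense_compl.2 <|
      dense_compl_singleton_iff_not_open.2 (h x hx)

end Topology

namespace MeasureTheory.Measure

variable {X : Type*} [MeasurableSpace X]

theorem countable_setOf_measure_singleton_ne_zero [MeasurableSingletonClass X]
    (μ : Measure X) [SFinite μ] : {x : X | μ {x} ≠ 0}.Countable := by
  simpa only [pos_iff_ne_zero] using
    countable_meas_pos_of_disjoint_iUnion (μ := μ) (As := fun x : X => {x})
      measurableSet_singleton fun _ _ hxy => disjoint_singleton.2 hxy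

instance nullSingletonClass_restrict_setOf_measure_singleton_eq_zero [MeasurableSingletonClass X]
    (μ : Measure X) : NullSingletonClass (μ.restrict {x : X | μ {x} = 0}) := by
  refine ⟨fun x => ?_⟩
  rw [restrict_apply (measurableSet_singleton x)]
  by_cases hx : μ {x} = 0
  · exact measure_mono_null inter_subset_left hx
  · rw [singleton_inter_eq_empty.2 (show x ∉ {y | μ {y} = 0} from hx), measure_empty]

variable [TopologicalSpace X] [SeparableSpace X]
  (ν : Measure X) [ν.OuterRegular] [NullSingletonClass ν]

theorem exists_isOpen_dense_measure_lt {ε : ℝ≥0∞} (hε : ε ≠ 0) :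
    ∃ U : Set X, IsOpen U ∧ Dense U ∧ ν U < ε := by
  obtain ⟨D, hDc, hDd⟩ := exists_countable_dense X
  have := hDc.to_subtype
  obtain ⟨δ, hδpos, hδsum⟩ := ENNReal.exists_pos_sum_of_countable' hε D
  have hnbhd (x : D) : ∃ V : Set X, {(x : X)} ⊆ V ∧ IsOpen V ∧ ν V < δ x :=
    exists_isOpen_lt_of_lt _ _ (by simpa only [measure_singleton] using hδpos x)
  choose V hxV hVo hVν using hnbhd
  refine ⟨⋃ x, V x, isOpen_iUnion hVo, ?_, ?_⟩
  · exact hDd.mono fun x hx => mem_iUnion.2 ⟨⟨x, hx⟩, hxV _ rfl⟩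
  · calc ν (⋃ x, V x) ≤ ∑' x, ν (V x) := measure_iUnion_le V
      _ ≤ ∑' x, δ x := ENNReal.tsum_le_tsum fun x => (hVν x).le
      _ < ε := hδsum

theorem exists_isMeagre_measure_compl_eq_zero : ∃ H : Set X, IsMeagre H ∧ ν Hᶜ = 0 := by
  have hsmall (n : ℕ) := exists_isOpen_dense_measure_lt ν
    (ENNReal.inv_ne_zero.2 (natCast_ne_top n))
  choose U hUo hUd hUν using hsmall
  refine ⟨(⋂ n, U n)ᶜ, ?_, ?_⟩
  · rw [IsMeagre, compl_compl]
    exact countable_iInter_mem.2 fun n => residual_of_dense_open (hUo n) (hUd n)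
  · rw [compl_compl]
    refine le_antisymm (ge_of_tendsto' ENNReal.tendsto_inv_nat_nhds_zero fun n => ?_) bot_le
    exact (measure_mono (iInter_subset U n)).trans (hUν n).le

end MeasureTheory.Measure

/-- Let `X` be a Polish space, `μ` a Borel probability measure on `X`, and
`A` the set of isolated points of `X` (points whose singleton is open).  Then there is a
meager set `H ⊆ X` with `μ(H) = 1` (the complement of `H` is `μ`-null) if and only if
`μ(A) = 0` (the set `A` is `μ`-null). -/
theorem stmt_15
    {X : Type} [TopologicalSpace X] [PolishSpace X] [MeasurableSpace X] [BorelSpace X]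
    (μ : ProbabilityMeasure X) :
    (∃ H : Set X, IsMeagre H ∧ (μ : Measure X) Hᶜ = 0) ↔
      (μ : Measure X) {x : X | IsOpen ({x} : Set X)} = 0 := by
  constructor
  · rintro ⟨H, hH, hHc⟩
    exact measure_mono_null (fun x hx => hH.notMem_of_isOpen_singleton hx) hHc
  · intro hA
    set S := {x : X | (μ : Measure X) {x} = 0}
    have hatoms : IsMeagre Sᶜ :=
      Set.Countable.isMeagre_of_forall_not_isOpen_singleton
        (Measure.countable_setOf_measure_singleton_ne_zero (μ : Measure X))
        fun x hx hxo => hx (measure_mono_null (singleton_subset_iff.2 hxo) hA)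
    obtain ⟨H, hH, hHc⟩ :=
      Measure.exists_isMeagre_measure_compl_eq_zero ((μ : Measure X).restrict S)
    refine ⟨H ∪ Sᶜ, hH.union hatoms, ?_⟩
    rw [compl_union, compl_compl]
    exact nonpos_iff_eq_zero.1 (hHc ▸ Measure.le_restrict_apply S Hᶜ)
end

section
/- Assume the Continuum Hypothesis (2^{ℵ₀} = ℵ₁). Then there exists a function φ : [0,1] → [0,1] such that: (i) for every meager set H ⊆ [0,1], the preimage φ⁻¹(H) is countable; and (ii) there is no Borel probability measure ν on [0,1] × [0,1] whose first marginal (pushforward under the first projection) is atomless and whose completion assigns measure 1 to the graph of φ (i.e., such that the complement of {(x, φ(x)) : x ∈ [0,1]} is ν-null). In particular, the graph of φ is null with respect to every Borel probability measure on [0,1] × [0,1] with atomless first marginal. -/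
/-!
Under CH, both `[0,1]` and the family of dense `Gδ` subsets of `[0,1]` (which is cofinal among
comeagre sets and has size `𝔠`) can be indexed by `ω₁`. Choosing `φ x_α` outside the countably
many meagre sets `Gᶜ` with index at most `α` makes the preimage of each such set lie in a countable
initial segment of `ω₁`. On the other hand every finite Borel measure on `[0,1]` is carried by a
meagre set `M` (its atoms together with the complement of a null dense `Gδ`). Applied to the
second marginal of `ν`, this covers the graph of `φ` by `{y ∉ M}`, which is `ν`-null, and by
`{x ∈ φ⁻¹ M}`, which is countable and hence null for an atomless first marginal.
-/

open MeasureTheory unitInterval Set Filter Cardinal TopologicalSpace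
open scoped ENNReal

universe u

section Meagre

variable {X : Type*} [TopologicalSpace X]

theorem isNowhereDense_singleton [T1Space X] [PerfectSpace X] (x : X) :
    IsNowhereDense ({x} : Set X) := by
  rw [isClosed_singleton.isNowhereDense_iff]
  exact interior_singleton x

theorem Set.Countable.isMeagre [T1Space X] [PerfectSpace X] {s : Set X} (hs : s.Countable) :
    IsMeagre s := by
  simpa using isMeagre_biUnion hs fun x _ => (isNowhereDense_singleton x).isMeagre

theorem Cardinal.mk_isGδ_le_continuum [SecondCountableTopology X] :
    #{s : Set X // IsGδ s} ≤ 𝔠 := by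
  borelize X
  have h := MeasurableSpace.cardinal_measurableSet_le_continuum
    ((MeasurableSpace.countable_countableGeneratingSet (α := X)).le_aleph0.trans
      aleph0_le_continuum)
  rw [MeasurableSpace.generateFrom_countableGeneratingSet] at h
  exact (mk_subtype_mono fun s hs => hs.measurableSet).trans h

end Meagre

section MeagreFullMeasure

variable {X : Type*} [TopologicalSpace X] [MeasurableSpace X]

theorem exists_isOpen_dense_measure_lt [SeparableSpace X] (μ : Measure X) [μ.OuterRegular]
    [NullSingletonClass μ] {ε : ℝ≥0∞} (hε : ε ≠ 0) :
    ∃ U : Set X, IsOpen U ∧ Dense U ∧ μ U < ε := by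
  obtain ⟨s, hs, hsd⟩ := exists_countable_dense X
  have := hs.to_subtype
  obtain ⟨δ, hδ, hδε⟩ := ENNReal.exists_pos_sum_of_countable' hε s
  have hU : ∀ x : s, ∃ U ⊇ {(x : X)}, IsOpen U ∧ μ U < δ x := fun x =>
    Set.exists_isOpen_lt_of_lt _ _ (by simpa using hδ x)
  choose U hxU hUo hUμ using hU
  refine ⟨⋃ x, U x, isOpen_iUnion hUo, hsd.mono fun x hx => mem_iUnion.2 ⟨⟨x, hx⟩, hxU _ rfl⟩, ?_⟩
  calc μ (⋃ x, U x) ≤ ∑' x, μ (U x) := measure_iUnion_le U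
    _ ≤ ∑' x, δ x := ENNReal.tsum_le_tsum fun x => (hUμ x).le
    _ < ε := hδε

theorem exists_isMeagre_measure_compl_eq_zero_of_nullSingletonClass [SeparableSpace X]
    (μ : Measure X) [μ.OuterRegular] [NullSingletonClass μ] :
    ∃ M : Set X, IsMeagre M ∧ μ Mᶜ = 0 := by
  have hU (n : ℕ) : ∃ U : Set X, IsOpen U ∧ Dense U ∧ μ U < (n : ℝ≥0∞)⁻¹ :=
    exists_isOpen_dense_measure_lt μ (ENNReal.inv_ne_zero.2 (ENNReal.natCast_ne_top n))
  choose U hUo hUd hUμ using hU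
  refine ⟨(⋂ n, U n)ᶜ, ?_, ?_⟩
  · rw [IsMeagre, compl_compl]
    exact countable_iInter_mem.2 fun n => residual_of_dense_open (hUo n) (hUd n)
  · rw [compl_compl, ← nonpos_iff_eq_zero]
    exact ge_of_tendsto' ENNReal.tendsto_inv_nat_nhds_zero fun n =>
      (measure_mono (iInter_subset U n)).trans (hUμ n).le

theorem exists_isMeagre_measure_compl_eq_zero [SeparableSpace X] [PseudoMetrizableSpace X]
    [T1Space X] [PerfectSpace X] [BorelSpace X] (μ : Measure X) [IsFiniteMeasure μ] :
    ∃ M : Set X, IsMeagre M ∧ μ Mᶜ = 0 := by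
  set A : Set X := {x | 0 < μ {x}}
  have hA : A.Countable := by
    simpa using Measure.countable_meas_level_set_pos (μ := μ) measurable_id
  have : NullSingletonClass (μ.restrict Aᶜ) := ⟨fun x => by
    by_cases hx : x ∈ A
    · simp [Measure.restrict_apply' hA.measurableSet.compl, hx]
    · exact nonpos_iff_eq_zero.1
        ((Measure.restrict_apply_le _ _).trans_eq (by simpa [A] using hx))⟩
  obtain ⟨M, hM, hMμ⟩ :=
    exists_isMeagre_measure_compl_eq_zero_of_nullSingletonClass (μ.restrict Aᶜ)
  refine ⟨M ∪ A, hM.union hA.isMeagre, ?_⟩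
  rwa [compl_union, ← Measure.restrict_apply' hA.measurableSet.compl]

end MeagreFullMeasure

theorem measure_graph_eq_zero {X Y : Type*} [MeasurableSpace X] [MeasurableSpace Y]
    {ν : Measure (X × Y)} {φ : X → Y} {M : Set Y} (hM : ν.map Prod.snd Mᶜ = 0)
    (hφM : (φ ⁻¹' M).Countable) (hν : ∀ x, ν.map Prod.fst {x} = 0) :
    ν {p | p.2 = φ p.1} = 0 := by
  have : NullSingletonClass (ν.map Prod.fst) := ⟨hν⟩
  have hsnd : ν (Prod.snd ⁻¹' Mᶜ) = 0 :=
    nonpos_iff_eq_zero.1 (hM ▸ Measure.le_map_apply measurable_snd.aemeasurable _)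
  have hfst : ν (Prod.fst ⁻¹' (φ ⁻¹' M)) = 0 :=
    nonpos_iff_eq_zero.1 (hφM.measure_zero (ν.map Prod.fst) ▸
      Measure.le_map_apply measurable_fst.aemeasurable _)
  refine measure_mono_null (fun p hp => ?_) (measure_union_null hsnd hfst)
  by_cases h : p.2 ∈ M
  · exact Or.inr (show φ p.1 ∈ M from hp ▸ h)
  · exact Or.inl h

theorem exists_countable_preimage_of_mk_le_aleph_one {X ι : Type u} {Y : Type*} {B : ι → Set Y}
    (hX : #X ≤ ℵ₁) (hι : #ι ≤ ℵ₁) (hB : ∀ s : Set ι, s.Countable → ⋃ i ∈ s, B i ≠ Set.univ) :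
    ∃ φ : X → Y, ∀ i, (φ ⁻¹' B i).Countable := by
  set O := (ℵ₁ : Cardinal.{u}).ord.ToType
  have hO : #O = ℵ₁ := mk_ord_toType _
  obtain ⟨e⟩ := (le_def X O).1 (hX.trans hO.ge)
  obtain ⟨f⟩ := (le_def ι O).1 (hι.trans hO.ge)
  have hIio (o : O) : (Iio o).Countable :=
    le_aleph0_iff_set_countable.1 (lt_aleph_one_iff.1 ((mk_Iio_lt o (by simp [O])).trans_eq hO))
  have hφ (x : X) : ∃ y, y ∉ ⋃ i ∈ f ⁻¹' Iic (e x), B i := by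
    by_contra! h
    exact hB _ (((hIio (e x)).insert (e x)).preimage f.injective) (eq_univ_of_forall h)
  choose φ hφ using hφ
  refine ⟨φ, fun i => ((hIio (f i)).preimage e.injective).mono fun x hx => ?_⟩
  exact not_le.1 fun (hle : f i ≤ e x) =>
    hφ x (mem_biUnion (show i ∈ f ⁻¹' Iic (e x) from hle) hx)

theorem exists_countable_preimage_isMeagre {Y : Type u} [TopologicalSpace Y]
    [SecondCountableTopology Y] [BaireSpace Y] [Nonempty Y] (hCH : (𝔠 : Cardinal.{u}) = ℵ₁)
    {X : Type u} (hX : #X ≤ ℵ₁) : ∃ φ : X → Y, ∀ H : Set Y, IsMeagre H → (φ ⁻¹' H).Countable := by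
  set ι := {G : Set Y // IsGδ G ∧ Dense G}
  have hι : #ι ≤ ℵ₁ :=
    ((mk_subtype_mono fun G hG => hG.1).trans mk_isGδ_le_continuum).trans hCH.le
  have hB (s : Set ι) (hs : s.Countable) : ⋃ G ∈ s, (G : Set Y)ᶜ ≠ Set.univ := fun h =>
    not_isMeagre_of_isOpen isOpen_univ univ_nonempty <| h ▸ isMeagre_biUnion hs fun G _ => by
      simpa [IsMeagre] using residual_of_dense_Gδ G.2.1 G.2.2
  obtain ⟨φ, hφ⟩ := exists_countable_preimage_of_mk_le_aleph_one hX hι hB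
  refine ⟨φ, fun H hH => ?_⟩
  obtain ⟨G, hGH, hG, hGd⟩ := mem_residual.1 hH
  exact (hφ ⟨G, hG, hGd⟩).mono (preimage_mono (subset_compl_comm.1 hGH))

/-- Assume the Continuum Hypothesis (`2 ^ ℵ₀ = ℵ₁`).  Then there is a
function `φ : [0,1] → [0,1]` such that:
(i) the preimage under `φ` of every meager subset of `[0,1]` is countable; and
(ii) there is no Borel probability measure `ν` on `[0,1] × [0,1]` whose first marginal
(pushforward under the first projection) is atomless and whose completion assigns measure `1`
to the graph of `φ` (i.e. with the complement of the graph `ν`-null).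
In particular, the graph of `φ` is null with respect to every Borel probability measure on
`[0,1] × [0,1]` with atomless first marginal. -/
theorem stmt_16 (hCH : (2 : Cardinal) ^ Cardinal.aleph0 = Cardinal.aleph 1) :
    ∃ φ : unitInterval → unitInterval,
      (∀ H : Set unitInterval, IsMeagre H → (φ ⁻¹' H).Countable) ∧
      (¬ ∃ ν : ProbabilityMeasure (unitInterval × unitInterval),
          (∀ a : unitInterval,
            ((ν : Measure (unitInterval × unitInterval)).map Prod.fst) {a} = 0) ∧
          (ν : Measure (unitInterval × unitInterval))
            {p : unitInterval × unitInterval | p.2 ≠ φ p.1} = 0) ∧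
      (∀ ν : ProbabilityMeasure (unitInterval × unitInterval),
        (∀ a : unitInterval,
          ((ν : Measure (unitInterval × unitInterval)).map Prod.fst) {a} = 0) →
        (ν : Measure (unitInterval × unitInterval))
          {p : unitInterval × unitInterval | p.2 = φ p.1} = 0) := by
  have hCH₀ : (𝔠 : Cardinal.{0}) = ℵ₁ := by
    rw [← two_power_aleph0]
    exact lift_injective (by simpa using hCH)
  obtain ⟨φ, hφ⟩ := exists_countable_preimage_isMeagre (X := I) (Y := I) hCH₀
    (by rw [← hCH₀, ← mk_Icc_real zero_lt_one])
  have hgraph (ν : ProbabilityMeasure (I × I))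
      (hν : ∀ a, (ν : Measure (I × I)).map Prod.fst {a} = 0) :
      (ν : Measure (I × I)) {p | p.2 = φ p.1} = 0 := by
    obtain ⟨M, hM, hνM⟩ :=
      exists_isMeagre_measure_compl_eq_zero ((ν : Measure (I × I)).map Prod.snd)
    exact measure_graph_eq_zero hνM (hφ M hM) hν
  refine ⟨φ, hφ, fun ⟨ν, hν, hνc⟩ => ?_, hgraph⟩
  have := measure_union_null (hgraph ν hν) hνc
  rw [← compl_ofPred, union_compl_self, measure_univ] at this
  exact one_ne_zero this
end

section
/- Let A ⊆ [0,1] be an arbitrary set, let μ₀ denote Lebesgue measure on [0,1] regarded as an element of Δ([0,1]), and let δ₁ ∈ Δ([0,1]) be the Dirac measure at 1. Let E = (([0,1] ∖ A) × {μ₀}) ∪ (A × {δ₁}) ⊆ [0,1] × Δ([0,1]). If there exists a Borel probability measure ν on [0,1] × Δ([0,1]) whose pushforward under the first projection equals μ₀ and whose completion assigns measure 1 to E (i.e., the complement of E is ν-null), then A is Lebesgue measurable. -/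
/-!
The sections `{x | (x, δ₁) ∉ T}` and `{x | (x, μ₀) ∉ T}` of a measurable `ν`-null hull `T` of `Eᶜ`
are Borel, the first lies inside `A` and the second outside it, and, since `ν` is carried by
`Tᶜ ⊆ E`, the first marginal gives their union full measure. Hence `A` differs from a Borel set by a
`μ₀`-null set.
-/

open MeasureTheory

/-- `Δ(ℝ)` (the space of Borel probability measures with the topology of weak convergence)
is equipped with the Borel σ-algebra of that topology. -/
noncomputable instance : MeasurableSpace (ProbabilityMeasure ℝ) :=
  borel (ProbabilityMeasure ℝ)

instance : BorelSpace (ProbabilityMeasure ℝ) := ⟨rfl⟩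

/-- `μ₀`: Lebesgue measure restricted to `[0,1]`, as a Borel probability measure. -/
noncomputable def mu0 : ProbabilityMeasure ℝ :=
  ⟨volume.restrict (Set.Icc (0 : ℝ) 1), by
    constructor
    rw [Measure.restrict_apply_univ, Real.volume_Icc]
    norm_num⟩

/-- `δ₁`: the Dirac measure at `1`, as a Borel probability measure. -/
noncomputable def delta1 : ProbabilityMeasure ℝ :=
  ⟨Measure.dirac (1 : ℝ), inferInstance⟩

theorem coe_mu0 : (mu0 : Measure ℝ) = volume.restrict (Set.Icc 0 1) := rfl

theorem coe_delta1 : (delta1 : Measure ℝ) = Measure.dirac 1 := rfl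

theorem mu0_ne_delta1 : mu0 ≠ delta1 := by
  intro h
  have h_one : (mu0 : Measure ℝ) {1} = (delta1 : Measure ℝ) {1} := by rw [h]
  rw [coe_mu0, coe_delta1, Measure.dirac_apply_of_mem (Set.mem_singleton 1)] at h_one
  have h_zero : (volume.restrict (Set.Icc (0 : ℝ) 1)) {1} = 0 :=
    nonpos_iff_eq_zero.1 ((Measure.restrict_le_self {1}).trans_eq Real.volume_singleton)
  exact one_ne_zero (h_one.symm.trans h_zero)

theorem nullMeasurableSet_map_fst_of_compl_graph_null {X Y : Type*} [MeasurableSpace X]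
    [MeasurableSpace Y] {ν : Measure (X × Y)} {s : Set X} {y₀ y₁ : Y} (hy : y₀ ≠ y₁)
    (hν : ν ((sᶜ ×ˢ {y₀}) ∪ (s ×ˢ {y₁}))ᶜ = 0) :
    NullMeasurableSet s (ν.map Prod.fst) := by
  set T := toMeasurable ν ((sᶜ ×ˢ {y₀}) ∪ (s ×ˢ {y₁}))ᶜ
  have hT : MeasurableSet T := measurableSet_toMeasurable _ _
  have hT_null : ν T = 0 := by rwa [measure_toMeasurable]
  have mem_graph : ∀ p ∉ T, p ∈ (sᶜ ×ˢ {y₀}) ∪ (s ×ˢ {y₁}) := fun p hp ↦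
    not_not.1 fun h ↦ hp (subset_toMeasurable _ _ h)
  set s₁ : Set X := (fun x ↦ (x, y₁)) ⁻¹' Tᶜ
  set s₀ : Set X := (fun x ↦ (x, y₀)) ⁻¹' Tᶜ
  have hs₁ : MeasurableSet s₁ := measurable_prodMk_right hT.compl
  have hs₀ : MeasurableSet s₀ := measurable_prodMk_right hT.compl
  have hs₁_sub : s₁ ⊆ s := fun x hx ↦ by
    rcases mem_graph _ hx with ⟨-, h⟩ | ⟨h, -⟩
    · exact absurd h hy.symm
    · exact h
  have hs₀_disj : Disjoint s₀ s := Set.disjoint_left.2 fun x hx ↦ by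
    rcases mem_graph _ hx with ⟨h, -⟩ | ⟨-, h⟩
    · exact h
    · exact absurd h hy
  have h_cover : (ν.map Prod.fst) (s₁ ∪ s₀)ᶜ = 0 := by
    rw [Measure.map_apply measurable_fst (hs₁.union hs₀).compl]
    refine measure_mono_null (fun ⟨x, y⟩ hxy ↦ ?_) hT_null
    by_contra hxyT
    rcases mem_graph _ hxyT with ⟨-, rfl⟩ | ⟨-, rfl⟩
    · exact hxy (Or.inr hxyT)
    · exact hxy (Or.inl hxyT)
  refine hs₁.nullMeasurableSet.congr (ae_eq_set.2 ⟨by simp [Set.sdiff_eq_empty.2 hs₁_sub], ?_⟩)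
  refine measure_mono_null (fun x ⟨hx, hx₁⟩ ↦ ?_) h_cover
  rintro (h | h)
  · exact hx₁ h
  · exact Set.disjoint_left.1 hs₀_disj h hx

/-- Let `A ⊆ [0,1]` be arbitrary and let
`E = (([0,1] \ A) × {μ₀}) ∪ (A × {δ₁}) ⊆ [0,1] × Δ([0,1])`.  If there is a Borel probability
measure `ν` on `[0,1] × Δ([0,1])` whose pushforward under the first projection is `μ₀` and
whose completion assigns measure `1` to `E` (the complement of `E` is `ν`-null), then `A` is
Lebesgue measurable. -/
theorem stmt_17 (A : Set ℝ) (hA : A ⊆ Set.Icc (0 : ℝ) 1)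
    (E : Set (ℝ × ProbabilityMeasure ℝ))
    (hE : E = ((Set.Icc (0 : ℝ) 1 \ A) ×ˢ ({mu0} : Set (ProbabilityMeasure ℝ))) ∪
      (A ×ˢ ({delta1} : Set (ProbabilityMeasure ℝ))))
    (ν : ProbabilityMeasure (ℝ × ProbabilityMeasure ℝ))
    (hmarg : (ν : Measure (ℝ × ProbabilityMeasure ℝ)).map Prod.fst = (mu0 : Measure ℝ))
    (hfull : (ν : Measure (ℝ × ProbabilityMeasure ℝ)) Eᶜ = 0) :
    NullMeasurableSet A (volume : Measure ℝ) := by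
  have h_graph : (ν : Measure (ℝ × ProbabilityMeasure ℝ))
      ((Aᶜ ×ˢ {mu0}) ∪ (A ×ˢ {delta1}))ᶜ = 0 := by
    refine measure_mono_null (Set.compl_subset_compl.2 ?_) hfull
    rw [hE]
    exact Set.union_subset_union_left _ (Set.prod_mono (fun x hx ↦ hx.2) le_rfl)
  have h_mu0 := nullMeasurableSet_map_fst_of_compl_graph_null mu0_ne_delta1 h_graph
  rw [hmarg, coe_mu0] at h_mu0
  exact (nullMeasurableSet_restrict_of_subset hA).1 h_mu0
end
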